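/- Let P := 864·A1^3·A2 + 3825·A1·B2^2 − 770·E6·A3·B2 − 840·E6·A2·B3 + 60·E6·A1·B4 + 21·E6^2·A5 ∈ K. Then in K the identity P/E4 = (1/9216)·(24·Δ·E4^2·E6·a2·b1·b2 − 18·Δ·E4^2·E6·a3·b1^2 + 20736·Δ·E4^2·a2·b1^3 + 5·Δ·E4·E6^2·a2^2·b1 − 28440·E6^2·b1^5 − 336·Δ^2·E4·E6·a2·a3 + 4824·Δ·E6^2·b1^2·b3 − 1008·Δ·E6^2·b1·b2^2 − 991872·Δ·E6·b1^3·b2 − 13436928·Δ·b1^5 − 384·Δ^2·E6^2·b5 + 27648·Δ^2·E6·b1·b4 + 76032·Δ^2·E6·b2·b3 − 12690432·Δ^2·b1·b2^2) holds; in particular P/E4 lies in the ℚ-subalgebra of K generated by E4, E6, a2, a3, b1, b2, b3, b4, b5. -/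

import Mathlib

set_option maxHeartbeats 1000000

noncomputable section

namespace E8Jacobi

/-- `K` is the fraction field of the polynomial ring
`ℚ[E4, E6, A1, A2, A3, A4, A5, B2, B3, B4, B6]` in eleven indeterminates. -/
abbrev K : Type := FractionRing (MvPolynomial (Fin 11) ℚ)

def v (i : Fin 11) : K := algebraMap (MvPolynomial (Fin 11) ℚ) K (MvPolynomial.X i)

def E4 : K := v 0
def E6 : K := v 1
def A1 : K := v 2
def A2 : K := v 3
def A3 : K := v 4
def A4 : K := v 5
def A5 : K := v 6
def B2 : K := v 7
def B3 : K := v 8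
def B4 : K := v 9
def B6 : K := v 10

def Δ : K := (E4^3 - E6^2)/1728

def b1 : K := -4*A1/E4
def a2 : K := (6/(E4*Δ)) * (-E4*A2 + A1^2)
def b2 : K := (5/(6*E4^2*Δ)) * (E4^2*B2 - E6*A1^2)
def a3 : K := (1/(9*E4^2*Δ^2)) *
  (-7*E4^2*E6*A3 - 20*E4^3*B3 - 9*E4*E6*A1*A2 + 30*E4^2*A1*B2 + 6*E6*A1^3)
def b3 : K := (1/(108*E4^3*Δ^2)) *
  (-7*E4^5*A3 - 20*E4^3*E6*B3 - 9*E4^4*A1*A2 + 30*E4^2*E6*A1*B2 + (16*E4^3 - 10*E6^2)*A1^3)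
def a4 : K := (1/(864*E4^3*Δ^3)) *
  ((E4^6 - E4^3*E6^2)*A4 + (56*E4^5 - 56*E4^2*E6^2)*A1*A3 - 27*E4^5*A2^2
   - 90*E4^3*E6*A2*B2 - 75*E4^4*B2^2 + (180*E4^4 - 36*E4*E6^2)*A1^2*A2
   + 240*E4^2*E6*A1^2*B2 + (-210*E4^3 + 18*E6^2)*A1^4)
def b4 : K := (1/(1728*E4^4*Δ^3)) *
  ((-5*E4^7 + 5*E4^4*E6^2)*B4 + (80*E4^6 - 80*E4^3*E6^2)*A1*B3
   + 9*E4^5*E6*A2^2 + 30*E4^6*A2*B2 + 25*E4^4*E6*B2^2 - 48*E4^4*E6*A1^2*A2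
   + (-140*E4^5 + 60*E4^2*E6^2)*A1^2*B2 + (74*E4^3*E6 - 10*E6^3)*A1^4)
def b5 : K := (1/(72*E4^5*Δ^3)) *
  ((-21*E4^7 + 21*E4^4*E6^2)*A5 - 294*E4^6*A2*A3 - 770*E4^4*E6*B2*A3
   - 840*E4^4*E6*A2*B3 - 2200*E4^5*B2*B3 + 168*E4^5*A1^2*A3
   + 480*E4^3*E6*A1^2*B3 - 621*E4^5*A1*A2^2 + 3525*E4^4*A1*B2^2
   + 1224*E4^4*A1^3*A2 - 240*E4^2*E6*A1^3*B2 + (-456*E4^3 + 24*E6^2)*A1^5)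
def b6 : K := (1/(13436928*E4^6*Δ^5)) *
  ((-20*E4^12 + 40*E4^9*E6^2 - 20*E4^6*E6^4)*B6
   + (-189*E4^10*E6 + 378*E4^7*E6^3 - 189*E4^4*E6^5)*A1*A5
   + (-9*E4^10*E6 + 9*E4^7*E6^3)*A2*A4
   + (-15*E4^11 + 15*E4^8*E6^2)*B2*A4
   + (-180*E4^11 + 180*E4^8*E6^2)*A2*B4
   + (-300*E4^9*E6 + 300*E4^6*E6^3)*B2*B4
   + (22*E4^9*E6 - 22*E4^6*E6^3)*A1^2*A4
   + (150*E4^10 + 120*E4^7*E6^2 - 270*E4^4*E6^4)*A1^2*B4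
   + (196*E4^10*E6 - 196*E4^7*E6^3)*A3^2
   + (1120*E4^11 - 1120*E4^8*E6^2)*A3*B3
   + (1600*E4^9*E6 - 1600*E4^6*E6^3)*B3^2
   + (-2982*E4^9*E6 + 2982*E4^6*E6^3)*A1*A2*A3
   + (-2520*E4^10 - 4410*E4^7*E6^2 + 6930*E4^4*E6^4)*A1*B2*A3
   + (3360*E4^10 - 10920*E4^7*E6^2 + 7560*E4^4*E6^4)*A1*A2*B3
   + (-19800*E4^8*E6 + 19800*E4^5*E6^3)*A1*B2*B3
   + (2016*E4^8*E6 - 2016*E4^5*E6^3)*A1^3*A3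
   + (-5920*E4^9 + 7360*E4^6*E6^2 - 1440*E4^3*E6^4)*A1^3*B3
   + (405*E4^9*E6 + 162*E4^6*E6^3)*A2^3
   + (1215*E4^10 + 1620*E4^7*E6^2)*A2^2*B2
   + 4725*E4^8*E6*A2*B2^2
   + (1125*E4^9 + 1500*E4^6*E6^2)*B2^3
   + (-9477*E4^8*E6 + 5103*E4^5*E6^3)*A1^2*A2^2
   + (-9180*E4^9 - 5400*E4^6*E6^2)*A1^2*A2*B2
   + (20925*E4^7*E6 - 33075*E4^4*E6^3)*A1^2*B2^2
   + (20304*E4^7*E6 - 9072*E4^4*E6^3)*A1^4*A2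
   + (12780*E4^8 + 5400*E4^5*E6^2 + 540*E4^2*E6^4)*A1^4*B2
   + (-11076*E4^6*E6 + 1512*E4^3*E6^3 - 36*E6^5)*A1^6)

/-- The Jacobi form `P_{16,5}`. -/
def P165 : K := 864*A1^3*A2 + 3825*A1*B2^2 - 770*E6*A3*B2 - 840*E6*A2*B3
  + 60*E6*A1*B4 + 21*E6^2*A5


/-!
Each of `b1, a2, b2, a3, b3, b4, b5` is an explicit rational function of the eleven generators
whose denominator is a monomial in `E4` and `Δ`, so the identity is checked by clearing these
denominators and comparing polynomials. Membership then follows because `Δ`, being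
`(E4^3 - E6^2)/1728`, already lies in the `ℚ`-algebra generated by `E4` and `E6`.
-/

theorem _root_.Subalgebra.ratCast_mem {A : Type*} [DivisionRing A] [Algebra ℚ A]
    (S : Subalgebra ℚ A) (q : ℚ) : (q : A) ∈ S := by
  simpa using S.algebraMap_mem q

theorem E4_ne_zero : E4 ≠ 0 :=
  (map_ne_zero_iff _ (IsFractionRing.injective _ K)).mpr (MvPolynomial.X_ne_zero 0)

theorem Δ_ne_zero : Δ ≠ 0 := by
  have hdisc : E4 ^ 3 - E6 ^ 2 = algebraMap (MvPolynomial (Fin 11) ℚ) K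
      (MvPolynomial.X 0 ^ 3 - MvPolynomial.X 1 ^ 2) := by
    simp [E4, E6, v]
  rw [Δ, hdisc]
  refine div_ne_zero ((map_ne_zero_iff _ (IsFractionRing.injective _ K)).mpr ?_) (by norm_num)
  intro h
  simpa using congrArg (MvPolynomial.eval fun i => if i = 0 then (1 : ℚ) else 0) h

theorem Δ_mem {S : Subalgebra ℚ K} (hE4 : E4 ∈ S) (hE6 : E6 ∈ S) : Δ ∈ S := by
  have hΔ : Δ = ((1728⁻¹ : ℚ) : K) * (E4 ^ 3 - E6 ^ 2) := by
    rw [Δ]; push_cast; ring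
  exact hΔ ▸ mul_mem (S.ratCast_mem _) (sub_mem (pow_mem hE4 3) (pow_mem hE6 2))

theorem P165_div_E4_eq :
    P165/E4 = (1/9216) * (24*Δ*E4^2*E6*a2*b1*b2 - 18*Δ*E4^2*E6*a3*b1^2
      + 20736*Δ*E4^2*a2*b1^3 + 5*Δ*E4*E6^2*a2^2*b1 - 28440*E6^2*b1^5
      - 336*Δ^2*E4*E6*a2*a3 + 4824*Δ*E6^2*b1^2*b3 - 1008*Δ*E6^2*b1*b2^2
      - 991872*Δ*E6*b1^3*b2 - 13436928*Δ*b1^5 - 384*Δ^2*E6^2*b5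
      + 27648*Δ^2*E6*b1*b4 + 76032*Δ^2*E6*b2*b3 - 12690432*Δ^2*b1*b2^2) := by
  have hE4 := E4_ne_zero
  have hΔ := Δ_ne_zero
  simp only [P165, a2, a3, b1, b2, b3, b4, b5]
  field_simp
  simp only [Δ]
  ring

theorem P165_div_E4_in_terms_of_ab :
    P165/E4 = (1/9216) * (24*Δ*E4^2*E6*a2*b1*b2 - 18*Δ*E4^2*E6*a3*b1^2
      + 20736*Δ*E4^2*a2*b1^3 + 5*Δ*E4*E6^2*a2^2*b1 - 28440*E6^2*b1^5
      - 336*Δ^2*E4*E6*a2*a3 + 4824*Δ*E6^2*b1^2*b3 - 1008*Δ*E6^2*b1*b2^2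
      - 991872*Δ*E6*b1^3*b2 - 13436928*Δ*b1^5 - 384*Δ^2*E6^2*b5
      + 27648*Δ^2*E6*b1*b4 + 76032*Δ^2*E6*b2*b3 - 12690432*Δ^2*b1*b2^2) ∧
    P165/E4 ∈ Algebra.adjoin ℚ ({E4, E6, a2, a3, b1, b2, b3, b4, b5} : Set K) := by
  refine ⟨P165_div_E4_eq, ?_⟩
  rw [P165_div_E4_eq]
  set S := Algebra.adjoin ℚ ({E4, E6, a2, a3, b1, b2, b3, b4, b5} : Set K)
  have hgen : ∀ x ∈ ({E4, E6, a2, a3, b1, b2, b3, b4, b5} : Set K), x ∈ S :=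
    fun _ hx => Algebra.subset_adjoin hx
  simp only [Set.mem_insert_iff, Set.mem_singleton_iff, forall_eq_or_imp, forall_eq] at hgen
  obtain ⟨hE4, hE6, ha2, ha3, hb1, hb2, hb3, hb4, hb5⟩ := hgen
  have hΔ : Δ ∈ S := Δ_mem hE4 hE6
  have h9216 : (1/9216 : K) ∈ S := by simpa using S.ratCast_mem (1/9216)
  -- `with_reducible` keeps `apply` from unfolding the numeric literals of `K`.
  repeat' with_reducible first
    | assumption
    | apply mul_mem | apply add_mem | apply sub_mem | apply pow_mem
  all_goals exact ofNat_mem S _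

end E8Jacobi
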